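/- Let a, c be real numbers with 1 + |c|/2 ≤ |a|. Then (1/(2π)²) ∫₀^{2π} ∫₀^{2π} log |2a cos θ₁ + 2 cos θ₂ + c| dθ₁ dθ₂ = log |a|. -/

import Mathlib

/-!
On the unit circle `z = e^{iθ}` one has `2a cos θ + b = z⁻¹ (a z² + b z + a)`, and for
`|b| ≤ 2|a|` both roots of `a z² + b z + a` lie on the unit circle, so the one-variable Mahler
measure gives `∫₀^{2π} log |2a cos θ + b| dθ = 2π log |a|`. Taking `b = 2 cos θ₂ + c`, so that
`|b| ≤ 2 + |c| ≤ 2|a|`, and integrating in `θ₁` first (Fubini) yields the theorem.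
-/

open Real MeasureTheory intervalIntegral Polynomial ComplexConjugate

namespace MeasureTheory

variable {α β : Type*} [MeasurableSpace α] [MeasurableSpace β] {μ : Measure α} {ν : Measure β}
  [IsFiniteMeasure μ] [IsFiniteMeasure ν]

/- Since `|f| = 2 f⁺ - f`, the upper bound on `f` and the lower bound on the slice integrals
bound the slice integrals of `|f|` uniformly. -/
theorem integrable_prod_of_le_of_le_integral {f : α × β → ℝ} {M C : ℝ}
    (hf : AEStronglyMeasurable f (μ.prod ν)) (hfM : ∀ p, f p ≤ M)
    (hint : ∀ᵐ y ∂ν, Integrable (fun x ↦ f (x, y)) μ)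
    (hC : ∀ᵐ y ∂ν, C ≤ ∫ x, f (x, y) ∂μ) :
    Integrable f (μ.prod ν) := by
  have hnorm (p : α × β) : ‖f p‖ ≤ 2 * max M 0 - f p := by
    rw [Real.norm_eq_abs, abs_le']
    constructor <;> linarith [hfM p, le_max_left M 0, le_max_right M 0]
  rw [integrable_prod_iff' hf]
  refine ⟨hint, .mono' (integrable_const (2 * max M 0 * μ.real Set.univ - C))
    hf.norm.prod_swap.integral_prod_right' ?_⟩
  filter_upwards [hint, hC] with y hy hCy
  rw [Real.norm_of_nonneg (integral_nonneg fun _ ↦ norm_nonneg _)]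
  calc ∫ x, ‖f (x, y)‖ ∂μ ≤ ∫ x, (2 * max M 0 - f (x, y)) ∂μ :=
        integral_mono hy.norm ((integrable_const _).sub hy) fun x ↦ hnorm (x, y)
    _ = 2 * max M 0 * μ.real Set.univ - ∫ x, f (x, y) ∂μ := by
        rw [integral_sub (integrable_const _) hy, integral_const, smul_eq_mul, mul_comm]
    _ ≤ 2 * max M 0 * μ.real Set.univ - C := by linarith

end MeasureTheory

noncomputable def palindromicQuadratic (a b : ℝ) : ℂ[X] :=
  C (a : ℂ) * X ^ 2 + C (b : ℂ) * X + C (a : ℂ)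

lemma norm_eval_palindromicQuadratic (a b : ℝ) {z : ℂ} (hz : ‖z‖ = 1) :
    ‖(palindromicQuadratic a b).eval z‖ = |2 * a * z.re + b| := by
  have hzz : z * conj z = 1 := by
    rw [Complex.mul_conj, Complex.normSq_eq_norm_sq, hz]; norm_num
  have hre := Complex.add_conj z
  have heval : (palindromicQuadratic a b).eval z = z * ((2 * a * z.re + b : ℝ) : ℂ) := by
    simp only [palindromicQuadratic, eval_add, eval_mul, eval_C, eval_pow, eval_X]
    push_cast at hre ⊢
    linear_combination (a : ℂ) * z * hre - (a : ℂ) * hzz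
  rw [heval, norm_mul, hz, one_mul, Complex.norm_real, Real.norm_eq_abs]

lemma log_norm_eval_circleMap_palindromicQuadratic (a b θ : ℝ) :
    log ‖(palindromicQuadratic a b).eval (circleMap 0 1 θ)‖ = log |2 * a * cos θ + b| := by
  rw [norm_eval_palindromicQuadratic a b (by simp [circleMap])]
  simp [circleMap]

lemma palindromicQuadratic_eq_C_mul_X_sub_C_mul_X_sub_C_conj {a b : ℝ} {w : ℂ} (hw : ‖w‖ = 1)
    (hb : 2 * a * w.re = -b) :
    palindromicQuadratic a b = C (a : ℂ) * (X - C w) * (X - C (conj w)) := by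
  have hsum : C (a : ℂ) * (C w + C (conj w)) = -C (b : ℂ) := by
    rw [← C_add, ← C_mul, ← C_neg, Complex.add_conj, ← Complex.ofReal_neg, ← hb]
    push_cast
    ring_nf
  have hprod : C w * C (conj w) = 1 := by
    rw [← C_mul, Complex.mul_conj, Complex.normSq_eq_norm_sq, hw]
    simp
  rw [palindromicQuadratic]
  linear_combination X * hsum - C (a : ℂ) * hprod

lemma Complex.exists_norm_eq_one_and_re_eq {t : ℝ} (ht : |t| ≤ 1) :
    ∃ w : ℂ, ‖w‖ = 1 ∧ w.re = t :=
  ⟨exp (arccos t * I), norm_exp_ofReal_mul_I _, by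
    rw [exp_ofReal_mul_I_re, Real.cos_arccos (abs_le.1 ht).1 (abs_le.1 ht).2]⟩

theorem logMahlerMeasure_palindromicQuadratic {a b : ℝ} (ha : a ≠ 0) (hb : |b| ≤ 2 * |a|) :
    (palindromicQuadratic a b).logMahlerMeasure = log |a| := by
  obtain ⟨w, hw, hre⟩ := Complex.exists_norm_eq_one_and_re_eq (t := -b / (2 * a)) (by
    rw [abs_div, abs_neg, abs_mul, abs_two]
    exact div_le_one_of_le₀ hb (by positivity))
  rw [palindromicQuadratic_eq_C_mul_X_sub_C_mul_X_sub_C_conj hw (by rw [hre]; field_simp),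
    logMahlerMeasure_eq_log_MahlerMeasure, mahlerMeasure_mul, mahlerMeasure_mul,
    mahlerMeasure_const, mahlerMeasure_X_sub_C, mahlerMeasure_X_sub_C, Complex.norm_conj, hw]
  simp

theorem intervalIntegrable_log_abs_two_mul_cos_add (a b : ℝ) :
    IntervalIntegrable (fun θ ↦ log |2 * a * cos θ + b|) volume 0 (2 * π) := by
  simpa only [log_norm_eval_circleMap_palindromicQuadratic] using
    intervalIntegrable_mahlerMeasure (palindromicQuadratic a b)

theorem integral_log_abs_two_mul_cos_add {a b : ℝ} (ha : a ≠ 0) (hb : |b| ≤ 2 * |a|) :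
    ∫ θ in 0..2 * π, log |2 * a * cos θ + b| = 2 * π * log |a| := by
  have h := logMahlerMeasure_palindromicQuadratic ha hb
  rw [logMahlerMeasure_def, circleAverage_def] at h
  simp only [log_norm_eval_circleMap_palindromicQuadratic, smul_eq_mul] at h
  rw [← h]
  field_simp

lemma abs_two_mul_cos_add_le (θ c : ℝ) : |2 * cos θ + c| ≤ 2 + |c| := by
  calc |2 * cos θ + c| ≤ 2 * |cos θ| + |c| := by
        simpa [abs_mul] using abs_add_le (2 * cos θ) c
    _ ≤ 2 + |c| := by linarith [abs_cos_le_one θ]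

lemma log_abs_two_mul_cos_add_two_mul_cos_add_le (a c θ₁ θ₂ : ℝ) :
    log |2 * a * cos θ₁ + 2 * cos θ₂ + c| ≤ 2 * |a| + 2 + |c| :=
  calc log |2 * a * cos θ₁ + 2 * cos θ₂ + c| ≤ |2 * a * cos θ₁ + (2 * cos θ₂ + c)| := by
        rw [← add_assoc]; exact log_le_self (abs_nonneg _)
    _ ≤ |2 * a * cos θ₁| + |2 * cos θ₂ + c| := abs_add_le _ _
    _ ≤ 2 * |a| * |cos θ₁| + (2 + |c|) := by
        rw [abs_mul, abs_mul, abs_two]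
        linarith [abs_two_mul_cos_add_le θ₂ c]
    _ ≤ 2 * |a| + 2 + |c| := by nlinarith [abs_cos_le_one θ₁, abs_nonneg a]

theorem integral_log_abs_two_mul_cos_add_two_mul_cos_add {a c : ℝ} (h : 2 + |c| ≤ 2 * |a|)
    (θ₂ : ℝ) :
    ∫ θ₁ in 0..2 * π, log |2 * a * cos θ₁ + 2 * cos θ₂ + c| = 2 * π * log |a| := by
  have ha : a ≠ 0 := by
    rintro rfl
    rw [abs_zero] at h
    linarith [abs_nonneg c]
  simpa only [add_assoc] using
    integral_log_abs_two_mul_cos_add ha ((abs_two_mul_cos_add_le θ₂ c).trans h)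

theorem integrable_log_abs_two_mul_cos_add_two_mul_cos_add {a c : ℝ} (h : 2 + |c| ≤ 2 * |a|) :
    Integrable (fun p : ℝ × ℝ ↦ log |2 * a * cos p.1 + 2 * cos p.2 + c|)
      ((volume.restrict (Set.Ioc 0 (2 * π))).prod (volume.restrict (Set.Ioc 0 (2 * π)))) := by
  have h2π : 0 ≤ 2 * π := by positivity
  refine integrable_prod_of_le_of_le_integral (C := 2 * π * log |a|)
    (measurable_log.comp (by fun_prop)).aestronglyMeasurable
    (fun p ↦ log_abs_two_mul_cos_add_two_mul_cos_add_le a c p.1 p.2)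
    (ae_of_all _ fun θ₂ ↦ ?_) (ae_of_all _ fun θ₂ ↦ ?_)
  · simpa only [add_assoc, IntegrableOn] using
      (intervalIntegrable_log_abs_two_mul_cos_add a (2 * cos θ₂ + c)).1
  · rw [← integral_of_le h2π, integral_log_abs_two_mul_cos_add_two_mul_cos_add h]

/-- Lemma 2 (`loga`): if `a, c` are real and `1 + |c|/2 ≤ |a|`, then the Mahler measure of
`P_{a,c}(x,y) = a(x + 1/x) + (y + 1/y) + c` equals `log |a|`. -/
theorem mahler_measure_Pac_eq_log_abs (a c : ℝ) (h : 1 + |c| / 2 ≤ |a|) :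
    (1 / (2 * π) ^ 2) *
      ∫ θ₁ in (0:ℝ)..(2 * π), ∫ θ₂ in (0:ℝ)..(2 * π),
        Real.log |2 * a * Real.cos θ₁ + 2 * Real.cos θ₂ + c| =
      Real.log |a| := by
  have h' : 2 + |c| ≤ 2 * |a| := by linarith
  have h2π : 0 ≤ 2 * π := by positivity
  calc (1 / (2 * π) ^ 2) *
        ∫ θ₁ in 0..2 * π, ∫ θ₂ in 0..2 * π, log |2 * a * cos θ₁ + 2 * cos θ₂ + c|
      = (1 / (2 * π) ^ 2) *
        ∫ θ₂ in 0..2 * π, ∫ θ₁ in 0..2 * π, log |2 * a * cos θ₁ + 2 * cos θ₂ + c| := by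
        simp only [integral_of_le h2π]
        rw [integral_integral_swap (integrable_log_abs_two_mul_cos_add_two_mul_cos_add h')]
    _ = log |a| := by
        simp only [integral_log_abs_two_mul_cos_add_two_mul_cos_add h',
          intervalIntegral.integral_const, sub_zero, smul_eq_mul]
        field_simp
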